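/- Let T > 0, a ∈ ℝ, ρ ∈ (0,1), ρ_β > 0, ρ_α > 0, and β, α ∈ ℝ unknown constants. Suppose s(i+1) = ρ·s(i) + T·(β̃(i)·a + α̃(i))·x(i) with β̃(i) = β − β̂(i), α̃(i) = α − α̂(i), the estimates updated by β̂(i+1) = β̂(i) + T·s(i)·a·x(i)/ρ_β and α̂(i+1) = α̂(i) + T·s(i)·x(i)/ρ_α, and additionally assume the quadratic increment terms vanish, i.e., (s(i+1) − s(i))² + ρ_β·(β̃(i+1) − β̃(i))² + ρ_α·(α̃(i+1) − α̃(i))² ≤ ε(i) with Σ_{i=0}^{∞} ε(i) < ∞. Then the Lyapunov function V(i) = (1/2)·s(i)² + (1/2)·ρ_β·β̃(i)² + (1/2)·ρ_α·α̃(i)² satisfies V(i+1) − V(i) ≤ −(1 − ρ)·s(i)² + (1/2)·ε(i), the sequence V(i) is bounded, Σ s(i)² < ∞, and s(i) → 0 as i → ∞. -/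

import Mathlib

/-!
Along the closed loop the Lyapunov function obeys the exact discrete energy identity
`V(i+1) - V(i) = -(1 - ρ) s(i)² + ½ (Δs² + ρ_β Δβ̃² + ρ_α Δα̃²)`: writing
`½ y² - ½ x² = x (y - x) + ½ (y - x)²` for each of the three terms, the adaptation laws are
chosen exactly so that the cross terms `s Δs`, `ρ_β β̃ Δβ̃`, `ρ_α α̃ Δα̃` sum to `-(1 - ρ) s²`.
Telescoping against the summable `ε` bounds `V`, and since `V ≥ 0` it also makes
`(1 - ρ) Σ s²` finite, so `s → 0`.
-/

open Filter Topology Finset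

section Lyapunov

variable {V u ε : ℕ → ℝ}

theorem add_sum_range_le_of_step (hstep : ∀ i, V (i + 1) + u i ≤ V i + ε i) (n : ℕ) :
    V n + ∑ i ∈ range n, u i ≤ V 0 + ∑ i ∈ range n, ε i := by
  induction n with
  | zero => simp
  | succ n ih =>
    rw [sum_range_succ, sum_range_succ]
    linarith [hstep n]

theorem le_add_tsum_of_step (hstep : ∀ i, V (i + 1) + u i ≤ V i + ε i)
    (hε : ∀ i, 0 ≤ ε i) (hεsum : Summable ε) (n : ℕ) :
    V n + ∑ i ∈ range n, u i ≤ V 0 + ∑' i, ε i :=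
  (add_sum_range_le_of_step hstep n).trans <| by
    gcongr; exact hεsum.sum_le_tsum _ fun i _ => hε i

theorem summable_of_step (hstep : ∀ i, V (i + 1) + u i ≤ V i + ε i) (hV : ∀ i, 0 ≤ V i)
    (hu : ∀ i, 0 ≤ u i) (hε : ∀ i, 0 ≤ ε i) (hεsum : Summable ε) : Summable u :=
  summable_of_sum_range_le (c := V 0 + ∑' i, ε i) hu fun n => by
    linarith [le_add_tsum_of_step hstep hε hεsum n, hV n]

end Lyapunov

theorem Filter.Tendsto.of_sq_tendsto_zero {ι : Type*} {l : Filter ι} {f : ι → ℝ}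
    (h : Tendsto (fun i => f i ^ 2) l (𝓝 0)) : Tendsto f l (𝓝 0) := by
  have habs := (Real.continuous_sqrt.tendsto 0).comp h
  simp only [Function.comp_def, Real.sqrt_sq_eq_abs, Real.sqrt_zero] at habs
  exact (tendsto_zero_iff_abs_tendsto_zero f).mpr habs

theorem dsmc_lyapunov_step_eq {ρ T a x s βt αt ρβ ρα s' βt' αt' : ℝ} (hρβ : ρβ ≠ 0)
    (hρα : ρα ≠ 0) (hs : s' = ρ * s + T * (βt * a + αt) * x)
    (hβt : βt' = βt - T * s * a * x / ρβ) (hαt : αt' = αt - T * s * x / ρα) :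
    (1 / 2 * s' ^ 2 + 1 / 2 * ρβ * βt' ^ 2 + 1 / 2 * ρα * αt' ^ 2)
        - (1 / 2 * s ^ 2 + 1 / 2 * ρβ * βt ^ 2 + 1 / 2 * ρα * αt ^ 2)
      = -(1 - ρ) * s ^ 2
        + 1 / 2 * ((s' - s) ^ 2 + ρβ * (βt' - βt) ^ 2 + ρα * (αt' - αt) ^ 2) := by
  subst hs hβt hαt
  field_simp
  ring

theorem scalar_adaptive_dsmc_convergence_summable_increments_general
    (T : ℝ) (a : ℝ) (ρ : ℝ) (hρ : 0 < ρ ∧ ρ < 1)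
    (ρβ ρα : ℝ) (hρβ : 0 < ρβ) (hρα : 0 < ρα)
    (β α : ℝ)
    (s x βhat αhat βtilde αtilde V ε : ℕ → ℝ)
    (hβtilde : ∀ i, βtilde i = β - βhat i)
    (hαtilde : ∀ i, αtilde i = α - αhat i)
    (hs : ∀ i, s (i + 1) = ρ * s i + T * (βtilde i * a + αtilde i) * x i)
    (hβhat : ∀ i, βhat (i + 1) = βhat i + T * s i * a * x i / ρβ)
    (hαhat : ∀ i, αhat (i + 1) = αhat i + T * s i * x i / ρα)
    (hε : ∀ i, (s (i + 1) - s i) ^ 2 + ρβ * (βtilde (i + 1) - βtilde i) ^ 2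
      + ρα * (αtilde (i + 1) - αtilde i) ^ 2 ≤ ε i)
    (hεsum : Summable ε)
    (hV : ∀ i, V i = (1 / 2) * (s i) ^ 2 + (1 / 2) * ρβ * (βtilde i) ^ 2
      + (1 / 2) * ρα * (αtilde i) ^ 2) :
    (∀ i, V (i + 1) - V i ≤ -(1 - ρ) * (s i) ^ 2 + (1 / 2) * ε i) ∧
    (∃ M, ∀ i, V i ≤ M) ∧
    Summable (fun i => (s i) ^ 2) ∧
    Filter.Tendsto s Filter.atTop (nhds 0) := by
  have hΔ : ∀ i, V (i + 1) - V i = -(1 - ρ) * s i ^ 2 + 1 / 2 * ((s (i + 1) - s i) ^ 2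
      + ρβ * (βtilde (i + 1) - βtilde i) ^ 2 + ρα * (αtilde (i + 1) - αtilde i) ^ 2) := by
    intro i
    have hβ : βtilde (i + 1) = βtilde i - T * s i * a * x i / ρβ := by
      rw [hβtilde, hβtilde, hβhat]; ring
    have hα : αtilde (i + 1) = αtilde i - T * s i * x i / ρα := by
      rw [hαtilde, hαtilde, hαhat]; ring
    rw [hV, hV]
    exact dsmc_lyapunov_step_eq hρβ.ne' hρα.ne' (hs i) hβ hα
  have hdecr : ∀ i, V (i + 1) - V i ≤ -(1 - ρ) * s i ^ 2 + 1 / 2 * ε i := fun i => by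
    linarith [hΔ i, hε i]
  have hV0 : ∀ i, 0 ≤ V i := fun i => by rw [hV]; positivity
  have hstep : ∀ i, V (i + 1) + (1 - ρ) * s i ^ 2 ≤ V i + 1 / 2 * ε i := fun i => by
    linarith [hdecr i]
  have hu : ∀ i, 0 ≤ (1 - ρ) * s i ^ 2 := fun i => mul_nonneg (by linarith [hρ.2]) (sq_nonneg _)
  have hεsum' : Summable fun i => 1 / 2 * ε i := hεsum.mul_left _
  have hε0' : ∀ i, 0 ≤ 1 / 2 * ε i := fun i =>
    mul_nonneg (by norm_num) ((by positivity : (0 : ℝ) ≤ _).trans (hε i))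
  have hsum : Summable fun i => s i ^ 2 :=
    (summable_mul_left_iff (sub_ne_zero.mpr hρ.2.ne')).mp
      (summable_of_step hstep hV0 hu hε0' hεsum')
  refine ⟨hdecr, ⟨V 0 + ∑' i, 1 / 2 * ε i, fun n => ?_⟩, hsum,
    hsum.tendsto_atTop_zero.of_sq_tendsto_zero⟩
  linarith [le_add_tsum_of_step hstep hε0' hεsum' n, sum_nonneg fun i (_ : i ∈ range n) => hu i]

/-- Under the scalar adaptive DSMC dynamics and adaptation laws
with `ρ ∈ (0,1)`, if the weighted squared increments are dominated by a
summable sequence `ε`, then the Lyapunov function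
`V(i) = ½s(i)² + ½ρ_β·β̃(i)² + ½ρ_α·α̃(i)²` satisfies
`V(i+1) − V(i) ≤ −(1 − ρ)·s(i)² + ½ε(i)`, `V` is bounded, `Σ s(i)² < ∞`, and
`s(i) → 0`. -/
theorem scalar_adaptive_dsmc_convergence_summable_increments
    (T : ℝ) (hT : 0 < T) (a : ℝ) (ρ : ℝ) (hρ : 0 < ρ ∧ ρ < 1)
    (ρβ ρα : ℝ) (hρβ : 0 < ρβ) (hρα : 0 < ρα)
    (β α : ℝ)
    (s x βhat αhat βtilde αtilde V ε : ℕ → ℝ)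
    (hβtilde : ∀ i, βtilde i = β - βhat i)
    (hαtilde : ∀ i, αtilde i = α - αhat i)
    (hs : ∀ i, s (i + 1) = ρ * s i + T * (βtilde i * a + αtilde i) * x i)
    (hβhat : ∀ i, βhat (i + 1) = βhat i + T * s i * a * x i / ρβ)
    (hαhat : ∀ i, αhat (i + 1) = αhat i + T * s i * x i / ρα)
    (hε : ∀ i, (s (i + 1) - s i) ^ 2 + ρβ * (βtilde (i + 1) - βtilde i) ^ 2
      + ρα * (αtilde (i + 1) - αtilde i) ^ 2 ≤ ε i)
    (hεsum : Summable ε)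
    (hV : ∀ i, V i = (1 / 2) * (s i) ^ 2 + (1 / 2) * ρβ * (βtilde i) ^ 2
      + (1 / 2) * ρα * (αtilde i) ^ 2) :
    (∀ i, V (i + 1) - V i ≤ -(1 - ρ) * (s i) ^ 2 + (1 / 2) * ε i) ∧
    (∃ M, ∀ i, V i ≤ M) ∧
    Summable (fun i => (s i) ^ 2) ∧
    Filter.Tendsto s Filter.atTop (nhds 0) :=
  scalar_adaptive_dsmc_convergence_summable_increments_general T a ρ hρ ρβ ρα hρβ hρα β α s x βhat
    αhat βtilde αtilde V ε hβtilde hαtilde hs hβhat hαhat hε hεsum hV
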